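/- Let 2 ≤ w < n and suppose a Steiner system S(2,w,n) exists (so w−1 divides n−1 and w(w−1) divides n(n−1)). Then the smallest integer q for which an (n, n(n−1)/(w(w−1)), w, 2w−1)_q code exists equals (n−1)/(w−1) + 1; that is, such a code exists for q = (n−1)/(w−1) + 1 and no such code exists for any q < (n−1)/(w−1) + 1. -/

import Mathlib

/-- The support of a word over the alphabet `{0, ..., q-1}` (represented as
naturals below `q`): the set of coordinates with nonzero entries. -/
def suppN {n : ℕ} (x : Fin n → ℕ) : Finset (Fin n) :=
  Finset.univ.filter (fun i => x i ≠ 0)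

/-- An `(n, M, w, d)_q` constant-weight code: a set of `M` words over
`{0,...,q-1}` of length `n` and weight `w` with pairwise Hamming distance at
least `d`. -/
def IsCWCode (n M w d q : ℕ) (C : Finset (Fin n → ℕ)) : Prop :=
  C.card = M ∧ (∀ x ∈ C, ∀ i, x i < q) ∧ (∀ x ∈ C, (suppN x).card = w) ∧
  ∀ x ∈ C, ∀ y ∈ C, x ≠ y → d ≤ hammingDist x y

/-- A Steiner system `S(t, k, n)` on the point set `Fin n`. -/
def IsSteiner {n : ℕ} (t k : ℕ) (B : Finset (Finset (Fin n))) : Prop :=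
  (∀ b ∈ B, b.card = k) ∧
  ∀ s : Finset (Fin n), s.card = t → ∃! b, b ∈ B ∧ s ⊆ b

open Finset

lemma suppN_mem {n : ℕ} (x : Fin n → ℕ) (i : Fin n) : i ∈ suppN x ↔ x i ≠ 0 := by
  simp [suppN]

/-- Two distinct blocks of a Steiner 2-design meet in at most one point. -/
lemma aux_inter_card {n w : ℕ} {B : Finset (Finset (Fin n))} (hB : IsSteiner 2 w B)
    {b b' : Finset (Fin n)} (hb : b ∈ B) (hb' : b' ∈ B) (hne : b ≠ b') :
    (b ∩ b').card ≤ 1 := by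
  by_contra h
  push_neg at h
  obtain ⟨i, hi, j, hj, hij⟩ := Finset.one_lt_card.mp h
  have hs : ({i, j} : Finset (Fin n)).card = 2 := by
    rw [Finset.card_insert_of_notMem (by simpa using hij), Finset.card_singleton]
  obtain ⟨u, -, huniq⟩ := hB.2 {i, j} hs
  have hsub : ∀ c : Finset (Fin n), i ∈ c → j ∈ c → ({i, j} : Finset (Fin n)) ⊆ c := by
    intro c hic hjc x hx
    simp only [Finset.mem_insert, Finset.mem_singleton] at hx
    rcases hx with rfl | rfl <;> assumption
  have h1 : b = u := huniq b ⟨hb, hsub b (Finset.mem_inter.mp hi).1 (Finset.mem_inter.mp hj).1⟩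
  have h2 : b' = u := huniq b' ⟨hb', hsub b' (Finset.mem_inter.mp hi).2 (Finset.mem_inter.mp hj).2⟩
  exact hne (h1.trans h2.symm)

/-- Each point of a Steiner 2-design lies on exactly `(n-1)/(w-1)` blocks. -/
lemma aux_point_deg {n w : ℕ} {B : Finset (Finset (Fin n))} (hB : IsSteiner 2 w B)
    (p : Fin n) : (B.filter (fun b => p ∈ b)).card * (w - 1) = n - 1 := by
  have hdisj : ∀ b ∈ B.filter (fun b => p ∈ b), ∀ b' ∈ B.filter (fun b => p ∈ b),
      b ≠ b' → Disjoint (b.erase p) (b'.erase p) := by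
    intro b hb b' hb' hne
    simp only [Finset.mem_filter] at hb hb'
    rw [Finset.disjoint_left]
    intro x hx hx'
    have hxp : x ≠ p := Finset.ne_of_mem_erase hx
    have hs : ({p, x} : Finset (Fin n)).card = 2 := by
      rw [Finset.card_insert_of_notMem (by simpa using hxp.symm), Finset.card_singleton]
    obtain ⟨u, -, huniq⟩ := hB.2 {p, x} hs
    have hsub : ∀ c : Finset (Fin n), p ∈ c → x ∈ c → ({p, x} : Finset (Fin n)) ⊆ c := by
      intro c h1 h2 y hy
      simp only [Finset.mem_insert, Finset.mem_singleton] at hy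
      rcases hy with rfl | rfl <;> assumption
    have h1 : b = u := huniq b ⟨hb.1, hsub b hb.2 (Finset.mem_of_mem_erase hx)⟩
    have h2 : b' = u := huniq b' ⟨hb'.1, hsub b' hb'.2 (Finset.mem_of_mem_erase hx')⟩
    exact hne (h1.trans h2.symm)
  have hcover : (B.filter (fun b => p ∈ b)).biUnion (fun b => b.erase p)
      = Finset.univ.erase p := by
    ext x
    simp only [Finset.mem_biUnion, Finset.mem_filter, Finset.mem_erase, Finset.mem_univ,
      and_true]
    constructor
    · rintro ⟨b, ⟨-, -⟩, hx, -⟩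
      exact hx
    · intro hxp
      have hs : ({p, x} : Finset (Fin n)).card = 2 := by
        rw [Finset.card_insert_of_notMem (by simpa using (Ne.symm hxp)), Finset.card_singleton]
      obtain ⟨u, ⟨hu, hsub⟩, -⟩ := hB.2 {p, x} hs
      exact ⟨u, ⟨hu, hsub (by simp)⟩, hxp, hsub (by simp)⟩
  have hcard := Finset.card_biUnion hdisj
  rw [hcover] at hcard
  have h1 : (Finset.univ.erase p).card = n - 1 := by
    rw [Finset.card_erase_of_mem (Finset.mem_univ p), Finset.card_univ, Fintype.card_fin]
  rw [h1] at hcard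
  have hsum : ∑ u ∈ B.filter (fun b => p ∈ b), (u.erase p).card
      = ∑ _u ∈ B.filter (fun b => p ∈ b), (w - 1) :=
    Finset.sum_congr rfl (fun b hb => by
      simp only [Finset.mem_filter] at hb
      rw [Finset.card_erase_of_mem hb.2, hB.1 b hb.1])
  rw [hsum, Finset.sum_const, smul_eq_mul] at hcard
  omega

/-- Double counting of point-block incidences. -/
lemma aux_doublecount {n : ℕ} {α : Type*} (S : Finset α) (f : α → Finset (Fin n)) :
    ∑ p : Fin n, (S.filter (fun b => p ∈ f b)).card = ∑ b ∈ S, (f b).card := by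
  simp only [Finset.card_filter]
  rw [Finset.sum_comm]
  refine Finset.sum_congr rfl fun b _ => ?_
  rw [← Finset.card_filter]
  simp [Finset.filter_mem_eq_inter]

/-- The codeword associated to a block. -/
noncomputable def wordAux {n : ℕ} (B : Finset (Finset (Fin n))) (b : Finset (Fin n)) :
    Fin n → ℕ :=
  fun i => if h : b ∈ B.filter (fun c => i ∈ c) then
    ((B.filter (fun c => i ∈ c)).equivFin ⟨b, h⟩ : Fin _).val + 1 else 0

lemma wordAux_eq_zero {n : ℕ} {B : Finset (Finset (Fin n))} {b : Finset (Fin n)}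
    {i : Fin n} (h : i ∉ b) : wordAux B b i = 0 := by
  rw [wordAux, dif_neg]
  simp only [Finset.mem_filter]
  tauto

lemma wordAux_ne_zero {n : ℕ} {B : Finset (Finset (Fin n))} {b : Finset (Fin n)}
    {i : Fin n} (hb : b ∈ B) (h : i ∈ b) : wordAux B b i ≠ 0 := by
  rw [wordAux, dif_pos (Finset.mem_filter.mpr ⟨hb, h⟩)]
  exact Nat.succ_ne_zero _

lemma wordAux_lt {n : ℕ} {B : Finset (Finset (Fin n))} {b : Finset (Fin n)} (i : Fin n) :
    wordAux B b i < (B.filter (fun c => i ∈ c)).card + 1 := by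
  rw [wordAux]
  split
  · exact Nat.succ_lt_succ (Fin.is_lt _)
  · exact Nat.succ_pos _

lemma wordAux_ne_at {n : ℕ} {B : Finset (Finset (Fin n))} {b b' : Finset (Fin n)}
    {i : Fin n} (hb : b ∈ B) (hb' : b' ∈ B) (hi : i ∈ b) (hi' : i ∈ b') (hne : b ≠ b') :
    wordAux B b i ≠ wordAux B b' i := by
  simp only [wordAux]
  rw [dif_pos (Finset.mem_filter.mpr ⟨hb, hi⟩), dif_pos (Finset.mem_filter.mpr ⟨hb', hi'⟩)]
  intro h
  have := Fin.val_injective (Nat.succ_injective h)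
  have := (B.filter (fun c => i ∈ c)).equivFin.injective this
  exact hne (congrArg Subtype.val this)

lemma suppN_wordAux {n : ℕ} {B : Finset (Finset (Fin n))} {b : Finset (Fin n)}
    (hb : b ∈ B) : suppN (wordAux B b) = b := by
  ext i
  rw [suppN_mem]
  constructor
  · intro h
    by_contra hi
    exact h (wordAux_eq_zero hi)
  · exact fun hi => wordAux_ne_zero hb hi

/-- If an `S(2,w,n)` exists, then the smallest `q` for which an
`(n, n(n-1)/(w(w-1)), w, 2w-1)_q` code exists equals `(n-1)/(w-1) + 1`. -/
theorem stmt_9 (n w : ℕ) (hw : 2 ≤ w) (hwn : w < n)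
    (B : Finset (Finset (Fin n))) (hB : IsSteiner 2 w B) :
    IsLeast {q : ℕ | ∃ C : Finset (Fin n → ℕ),
        IsCWCode n (n * (n - 1) / (w * (w - 1))) w (2 * w - 1) q C}
      ((n - 1) / (w - 1) + 1) := by
  classical
  set r := (n - 1) / (w - 1) with hr_def
  have hn3 : 3 ≤ n := by omega
  have hnpos : 0 < n := by omega
  -- every point has degree r
  have hdeg : ∀ p : Fin n, (B.filter (fun b => p ∈ b)).card = r := by
    intro p
    have h := aux_point_deg hB p
    rw [hr_def]
    exact (Nat.div_eq_of_eq_mul_left (show 0 < w - 1 by omega) h.symm).symm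
  have hBw : n * r = B.card * w := by
    calc n * r = ∑ _p : Fin n, r := by
          rw [Finset.sum_const, Finset.card_univ, Fintype.card_fin, smul_eq_mul]
      _ = ∑ p : Fin n, (B.filter (fun b => p ∈ b)).card :=
          Finset.sum_congr rfl (fun p _ => (hdeg p).symm)
      _ = ∑ b ∈ B, b.card := aux_doublecount B (fun b => b)
      _ = ∑ _b ∈ B, w := Finset.sum_congr rfl (fun b hb => hB.1 b hb)
      _ = B.card * w := by rw [Finset.sum_const, smul_eq_mul]
  have hr1 : r * (w - 1) = n - 1 := by
    have h := aux_point_deg hB ⟨0, hnpos⟩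
    rwa [hdeg ⟨0, hnpos⟩] at h
  have hM : n * (n - 1) / (w * (w - 1)) = B.card := by
    have heq : n * (n - 1) = B.card * (w * (w - 1)) := by
      calc n * (n - 1) = n * (r * (w - 1)) := by rw [hr1]
        _ = (n * r) * (w - 1) := by ring
        _ = (B.card * w) * (w - 1) := by rw [hBw]
        _ = B.card * (w * (w - 1)) := by ring
    exact Nat.div_eq_of_eq_mul_left (Nat.mul_pos (by omega) (by omega)) heq
  constructor
  · -- existence of the code for q = r + 1
    refine ⟨B.image (wordAux B), ?_, ?_, ?_, ?_⟩
    · rw [hM]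
      apply Finset.card_image_of_injOn
      intro b hb b' hb' h
      have h2 := congrArg suppN h
      rwa [suppN_wordAux (Finset.mem_coe.mp hb), suppN_wordAux (Finset.mem_coe.mp hb')] at h2
    · rintro x hx i
      obtain ⟨b, hbB, rfl⟩ := Finset.mem_image.mp hx
      have := wordAux_lt (B := B) (b := b) i
      rwa [hdeg i] at this
    · rintro x hx
      obtain ⟨b, hbB, rfl⟩ := Finset.mem_image.mp hx
      rw [suppN_wordAux hbB]
      exact hB.1 b hbB
    · rintro x hx y hy hxy
      obtain ⟨b, hbB, rfl⟩ := Finset.mem_image.mp hx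
      obtain ⟨b', hb'B, rfl⟩ := Finset.mem_image.mp hy
      have hbb' : b ≠ b' := fun h => hxy (by rw [h])
      have hsub : b ∪ b' ⊆ Finset.univ.filter
          (fun i => wordAux B b i ≠ wordAux B b' i) := by
        intro i hi
        simp only [Finset.mem_filter, Finset.mem_univ, true_and]
        rcases Finset.mem_union.mp hi with h1 | h1
        · by_cases h2 : i ∈ b'
          · exact wordAux_ne_at hbB hb'B h1 h2 hbb'
          · rw [wordAux_eq_zero h2]
            exact wordAux_ne_zero hbB h1
        · by_cases h2 : i ∈ b
          · exact wordAux_ne_at hbB hb'B h2 h1 hbb'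
          · rw [wordAux_eq_zero h2]
            exact (wordAux_ne_zero hb'B h1).symm
      have hcard2 : 2 * w - 1 ≤ (b ∪ b').card := by
        have h1 := Finset.card_union_add_card_inter b b'
        have h2 := aux_inter_card hB hbB hb'B hbb'
        have h3 := hB.1 b hbB
        have h4 := hB.1 b' hb'B
        omega
      exact le_trans hcard2 (Finset.card_le_card hsub)
  · -- minimality
    rintro q ⟨C, hcard, hlt, hsupp, hdist⟩
    have hBcard_pos : 0 < B.card := by
      have hs : ({(⟨0, by omega⟩ : Fin n), ⟨1, by omega⟩} : Finset (Fin n)).card = 2 := by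
        rw [Finset.card_insert_of_notMem (by simp [Fin.ext_iff]), Finset.card_singleton]
      obtain ⟨u, ⟨hu, -⟩, -⟩ := hB.2 _ hs
      exact Finset.card_pos.mpr ⟨u, hu⟩
    have hCpos : 0 < C.card := by rw [hcard, hM]; exact hBcard_pos
    obtain ⟨x0, hx0⟩ := Finset.card_pos.mp hCpos
    have hq1 : 1 ≤ q := lt_of_le_of_lt (Nat.zero_le _) (hlt x0 hx0 ⟨0, hnpos⟩)
    have hcoord : ∀ i : Fin n, (C.filter (fun x => i ∈ suppN x)).card ≤ q - 1 := by
      intro i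
      have hle : (C.filter (fun x => i ∈ suppN x)).card ≤ (Finset.Ioo 0 q).card := by
        apply Finset.card_le_card_of_injOn (fun x => x i)
        · intro x hx
          simp only [Finset.mem_coe, Finset.mem_filter, suppN_mem] at hx
          exact Finset.mem_Ioo.mpr ⟨Nat.pos_of_ne_zero hx.2, hlt x hx.1 i⟩
        · intro x hx y hy hxy
          replace hxy : x i = y i := hxy
          simp only [Finset.coe_filter, Set.mem_setOf_eq, suppN_mem] at hx hy
          by_contra hne
          have hd := hdist x hx.1 y hy.1 hne
          have hsub2 : Finset.univ.filter (fun j => x j ≠ y j)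
              ⊆ (suppN x ∪ suppN y).erase i := by
            intro j hj
            simp only [Finset.mem_filter, Finset.mem_univ, true_and] at hj
            refine Finset.mem_erase.mpr ⟨?_, ?_⟩
            · rintro rfl; exact hj hxy
            · by_contra hns
              simp only [Finset.mem_union, suppN_mem, not_or, not_not] at hns
              exact hj (by rw [hns.1, hns.2])
          have hiu : i ∈ suppN x ∪ suppN y :=
            Finset.mem_union.mpr (Or.inl ((suppN_mem x i).mpr hx.2))
          have hii : i ∈ suppN x ∩ suppN y :=
            Finset.mem_inter.mpr ⟨(suppN_mem x i).mpr hx.2, (suppN_mem y i).mpr hy.2⟩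
          have h1 := Finset.card_union_add_card_inter (suppN x) (suppN y)
          have h3 : 1 ≤ (suppN x ∩ suppN y).card := Finset.card_pos.mpr ⟨i, hii⟩
          have h4 : ((suppN x ∪ suppN y).erase i).card = (suppN x ∪ suppN y).card - 1 :=
            Finset.card_erase_of_mem hiu
          rw [hsupp x hx.1, hsupp y hy.1] at h1
          have h5 : hammingDist x y ≤ ((suppN x ∪ suppN y).erase i).card :=
            Finset.card_le_card hsub2
          rw [h4] at h5
          set a := (suppN x ∪ suppN y).card with ha
          set c := (suppN x ∩ suppN y).card with hc
          set D := hammingDist x y with hD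
          omega
      rwa [Nat.card_Ioo] at hle
    have hsum : B.card * w ≤ n * (q - 1) := by
      calc B.card * w = ∑ _b ∈ C, w := by rw [Finset.sum_const, smul_eq_mul, hcard, hM]
        _ = ∑ x ∈ C, (suppN x).card := Finset.sum_congr rfl (fun x hx => (hsupp x hx).symm)
        _ = ∑ i : Fin n, (C.filter (fun x => i ∈ suppN x)).card :=
            (aux_doublecount C (fun x => suppN x)).symm
        _ ≤ ∑ _i : Fin n, (q - 1) := Finset.sum_le_sum (fun i _ => hcoord i)
        _ = n * (q - 1) := by
            rw [Finset.sum_const, Finset.card_univ, Fintype.card_fin, smul_eq_mul]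
    rw [← hBw] at hsum
    have hrq : r ≤ q - 1 := Nat.le_of_mul_le_mul_left hsum hnpos
    omega
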